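/- Let a right/return walking automaton be given (finite state type Q, non-blank symbol set S, transition δ : Q → Option S → Q × Bool, accepting set A ⊆ Q, initial state q₀), let k : ℕ and s : Fin k → S, and let N = lcm(1, …, Fintype.card Q). If the automaton accepts on the sparse guess τ_{x,s} for some x : Fin (k+1) → ℕ, then there exists y : Fin (k+1) → ℕ with y i ≤ Fintype.card Q + N for all i such that the automaton accepts on the sparse guess τ_{y,s}. (The paper's Claim 1: if B accepts on some k-sparse guess, then it accepts on a k-sparse guess of exponentially bounded length.) -/

import Mathlib

/-!
On a block of blanks the automaton just iterates the blank map `h q = (δ q none).1`, stepping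
right until it either reads the next symbol or returns to cell `0`. A return inside a block
happens within its first `|Q|` blanks, since every state `h^[i] q` already occurs for some
`i < |Q|`. Moreover, `h^[|Q|] q` lies on a cycle, whose length divides `N`, so `h^[|Q| + a] q`
depends only on `a mod N`. Hence replacing every block length `L > |Q| + N` by
`|Q| + (L - |Q|) % N` changes neither the returns nor the state in which the next symbol is
read, and the shortened run reproduces the original one block by block.
-/

/-- One step of a right/return walking automaton with transition `δ` on guess
tape `τ`: a configuration is a pair (state, position); move component `true`
means step right, `false` means return to cell `0`. -/
def wstep {Q S : Type*} (δ : Q → Option S → Q × Bool) (τ : ℕ → Option S) :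
    Q × ℕ → Q × ℕ :=
  fun c =>
    let r := δ c.1 (τ c.2)
    (r.1, if r.2 then c.2 + 1 else 0)

/-- The automaton accepts on guess `τ` if the run started at `(q₀, 0)` reaches
a configuration whose state lies in `A`. -/
def wAccepts {Q S : Type*} (δ : Q → Option S → Q × Bool) (A : Set Q) (q₀ : Q)
    (τ : ℕ → Option S) : Prop :=
  ∃ n : ℕ, ((wstep δ τ)^[n] (q₀, 0)).1 ∈ A

/-- The sparse guess `0^{x 0} s 0 0^{x 1} s 1 ⋯ s (k-1) 0^{x k} 0 0 ⋯`:
cell `p` holds `some (s j)` iff `p = (x 0 + ⋯ + x j) + j`, and `none` otherwise. -/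
noncomputable def sparseGuess {S : Type*} (k : ℕ) (x : Fin (k + 1) → ℕ)
    (s : Fin k → S) (p : ℕ) : Option S :=
  if h : ∃ j : Fin k, p = (∑ i ∈ Finset.Iic (Fin.castSucc j), x i) + (j : ℕ)
  then some (s h.choose) else none

open Finset Function

section Iterate

variable {α : Type*} [Fintype α] (f : α → α) (x : α)

theorem Function.exists_isPeriodicPt_iterate :
    ∃ a p, 0 < p ∧ a + p ≤ Fintype.card α ∧ IsPeriodicPt f p (f^[a] x) := by
  obtain ⟨i, j, hne, hij⟩ := Fintype.exists_ne_map_eq_of_card_lt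
    (fun n : Fin (Fintype.card α + 1) => f^[n] x) (by simp)
  wlog hlt : (i : ℕ) < j generalizing i j
  · exact this j i hne.symm hij.symm (by omega)
  refine ⟨i, j - i, by omega, by omega, ?_⟩
  rw [IsPeriodicPt, IsFixedPt, ← iterate_add_apply, Nat.sub_add_cancel hlt.le]
  exact hij.symm

theorem Function.exists_lt_card_iterate_eq (n : ℕ) :
    ∃ m < Fintype.card α, f^[m] x = f^[n] x := by
  by_cases hn : n < Fintype.card α
  · exact ⟨n, hn, rfl⟩
  obtain ⟨a, p, hp, hap, hper⟩ := exists_isPeriodicPt_iterate f x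
  refine ⟨a + (n - a) % p, by have := Nat.mod_lt (n - a) hp; omega, ?_⟩
  calc f^[a + (n - a) % p] x = f^[(n - a) % p] (f^[a] x) := by rw [add_comm, iterate_add_apply]
    _ = f^[n - a] (f^[a] x) := hper.iterate_mod_apply _
    _ = f^[n] x := by rw [← iterate_add_apply, Nat.sub_add_cancel (by omega)]

theorem Function.iterate_card_add_eq_of_modEq {a b : ℕ}
    (h : a ≡ b [MOD (Icc 1 (Fintype.card α)).lcm id]) :
    f^[Fintype.card α + a] x = f^[Fintype.card α + b] x := by
  obtain ⟨i, p, hp, hip, hper⟩ := exists_isPeriodicPt_iterate f x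
  have hpN : p ∣ (Icc 1 (Fintype.card α)).lcm id := dvd_lcm (mem_Icc.mpr ⟨hp, by omega⟩)
  have hz : IsPeriodicPt f p (f^[Fintype.card α] x) := by
    simpa only [← iterate_add_apply, Nat.sub_add_cancel (show i ≤ Fintype.card α by omega)]
      using hper.apply_iterate (Fintype.card α - i)
  rw [add_comm, iterate_add_apply, add_comm, iterate_add_apply, ← hz.iterate_mod_apply a,
    ← hz.iterate_mod_apply b, h.of_dvd hpN]

end Iterate

section Run

variable {Q S : Type*} (δ : Q → Option S → Q × Bool)

def blankMap (q : Q) : Q := (δ q none).1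

def WalksRight (q : Q) (t : ℕ) : Prop :=
  ∀ i < t, (δ ((blankMap δ)^[i] q) none).2 = true

def Reaches (τ : ℕ → Option S) (c c' : Q × ℕ) : Prop :=
  ∃ n, (wstep δ τ)^[n] c = c'

variable {δ} {τ : ℕ → Option S} {q : Q} {p t : ℕ} {c c' : Q × ℕ}

theorem wstep_apply (q : Q) (p : ℕ) :
    wstep δ τ (q, p) = ((δ q (τ p)).1, if (δ q (τ p)).2 then p + 1 else 0) := rfl

theorem WalksRight.mono {t' : ℕ} (h : WalksRight δ q t) (ht : t' ≤ t) : WalksRight δ q t' :=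
  fun i hi => h i (hi.trans_le ht)

theorem WalksRight.succ (h : WalksRight δ q t) (ht : (δ ((blankMap δ)^[t] q) none).2 = true) :
    WalksRight δ q (t + 1) :=
  fun i hi => (Nat.lt_succ_iff_lt_or_eq.mp hi).elim (h i) (· ▸ ht)

theorem WalksRight.lt_card_of_return [Fintype Q] (h : WalksRight δ q t)
    (hret : (δ ((blankMap δ)^[t] q) none).2 = false) : t < Fintype.card Q := by
  by_contra! hle
  obtain ⟨m, hm, heq⟩ := exists_lt_card_iterate_eq (blankMap δ) q t
  have := h m (by omega)
  rw [heq, hret] at this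
  exact Bool.false_ne_true this

theorem wstep_iterate_of_walksRight (hτ : ∀ i < t, τ (p + i) = none) (hw : WalksRight δ q t) :
    (wstep δ τ)^[t] (q, p) = ((blankMap δ)^[t] q, p + t) := by
  induction t with
  | zero => rfl
  | succ t ih =>
    rw [iterate_succ_apply', ih (fun i hi => hτ i (by omega)) (hw.mono t.le_succ), wstep_apply,
      hτ t t.lt_succ_self, hw t t.lt_succ_self, iterate_succ_apply']
    rfl

theorem Reaches.wstep (h : Reaches δ τ c c') : Reaches δ τ c (wstep δ τ c') := by
  obtain ⟨n, rfl⟩ := h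
  exact ⟨n + 1, iterate_succ_apply' _ _ _⟩

theorem Reaches.walk_right (h : Reaches δ τ c (q, p)) (hτ : ∀ i < t, τ (p + i) = none)
    (hw : WalksRight δ q t) : Reaches δ τ c ((blankMap δ)^[t] q, p + t) := by
  obtain ⟨n, hn⟩ := h
  exact ⟨t + n, by rw [iterate_add_apply, hn, wstep_iterate_of_walksRight hτ hw]⟩

end Run

section Layout

variable {S : Type*} {k : ℕ} (x : Fin (k + 1) → ℕ) (s : Fin k → S) {j o : ℕ}

def blockLen (j : ℕ) : ℕ := if h : j < k + 1 then x ⟨j, h⟩ else 0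

def blockStart (j : ℕ) : ℕ := ∑ i ∈ range j, blockLen x i + j

theorem blockLen_comp (g : ℕ → ℕ) (hj : j ≤ k) : blockLen (g ∘ x) j = g (blockLen x j) := by
  simp [blockLen, Nat.lt_succ_of_le hj]

theorem blockStart_zero : blockStart x 0 = 0 := by simp [blockStart]

theorem blockStart_succ : blockStart x (j + 1) = blockStart x j + blockLen x j + 1 := by
  simp only [blockStart, sum_range_succ]
  ring

theorem blockStart_mono : Monotone (blockStart x) :=
  monotone_nat_of_le_succ fun j => by rw [blockStart_succ]; omega

theorem blockStart_add_blockLen_mono : Monotone fun j => blockStart x j + blockLen x j := fun a b hab => by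
  dsimp only
  have := blockStart_mono x (Nat.succ_le_succ hab)
  simp only [blockStart_succ] at this
  omega

theorem blockStart_add_blockLen_strictMono : StrictMono fun j : Fin k => blockStart x j + blockLen x j :=
  fun a b hab => by
    have := blockStart_mono x (show (a : ℕ) + 1 ≤ b from hab)
    dsimp only
    rw [blockStart_succ] at this
    omega

theorem sum_Iic_castSucc_add (j : Fin k) :
    ∑ i ∈ Iic (Fin.castSucc j), x i + j = blockStart x j + blockLen x j := by
  have hsum : ∑ i ∈ Iic (Fin.castSucc j), x i = ∑ i ∈ range (j + 1), blockLen x i := by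
    rw [Nat.range_succ_eq_Iic, ← Fin.val_castSucc, ← Fin.map_valEmbedding_Iic, sum_map]
    exact sum_congr rfl fun i _ => by simp [blockLen, i.isLt]
  rw [hsum, sum_range_succ, blockStart]
  ring

theorem sparseGuess_symbol (hj : j < k) :
    sparseGuess k x s (blockStart x j + blockLen x j) = some (s ⟨j, hj⟩) := by
  have h : ∃ j' : Fin k, blockStart x j + blockLen x j
      = ∑ i ∈ Iic (Fin.castSucc j'), x i + j' := ⟨⟨j, hj⟩, (sum_Iic_castSucc_add x ⟨j, hj⟩).symm⟩
  rw [sparseGuess, dif_pos h]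
  have hspec := h.choose_spec
  rw [sum_Iic_castSucc_add] at hspec
  rw [(blockStart_add_blockLen_strictMono x).injective (a₂ := ⟨j, hj⟩) hspec.symm]

theorem sparseGuess_blank (ho : o < blockLen x j ∨ j = k) :
    sparseGuess k x s (blockStart x j + o) = none := by
  rw [sparseGuess, dif_neg]
  rintro ⟨j', hj'⟩
  rw [sum_Iic_castSucc_add] at hj'
  rcases lt_or_ge (j' : ℕ) j with h | h
  · have := blockStart_mono x (Nat.succ_le_of_lt h)
    rw [blockStart_succ] at this
    omega
  · have := blockStart_add_blockLen_mono x h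
    simp only at this
    omega

end Layout

section Simulation

variable {Q S : Type*} {δ : Q → Option S → Q × Bool} {q₀ : Q} {k : ℕ} {s : Fin k → S}
  {x y : Fin (k + 1) → ℕ} {e : Q} {j o : ℕ}

def IsShortening [Fintype Q] (δ : Q → Option S → Q × Bool) (L L' : ℕ) : Prop :=
  L' ≤ L ∧ (L' = L ∨ Fintype.card Q ≤ L') ∧ (blankMap δ)^[L'] = (blankMap δ)^[L]

/-- The `x`-configuration `c` lies `o` cells into block `j`, which was entered in state `e`,
and the run on the `y`-tape reaches the entry of its own block `j` in the same state `e`. -/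
def Synced (δ : Q → Option S → Q × Bool) (q₀ : Q) (s : Fin k → S) (x y : Fin (k + 1) → ℕ)
    (c : Q × ℕ) : Prop :=
  ∃ j o e, j ≤ k ∧ (j < k → o ≤ blockLen x j) ∧ WalksRight δ e o ∧
    c = ((blankMap δ)^[o] e, blockStart x j + o) ∧
    Reaches δ (sparseGuess k y s) (q₀, 0) (e, blockStart y j)

theorem synced_of_reaches_blockStart (hj : j ≤ k)
    (h : Reaches δ (sparseGuess k y s) (q₀, 0) (e, blockStart y j)) :
    Synced δ q₀ s x y (e, blockStart x j) :=
  ⟨j, 0, e, hj, fun _ => Nat.zero_le _, fun i hi => absurd hi (Nat.not_lt_zero i), rfl, h⟩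

variable [Fintype Q]

theorem Synced.wstep_of_symbol (hxy : IsShortening δ (blockLen x j) (blockLen y j))
    (hj : j < k) (hw : WalksRight δ e (blockLen x j))
    (hr : Reaches δ (sparseGuess k y s) (q₀, 0) (e, blockStart y j)) :
    Synced δ q₀ s x y (wstep δ (sparseGuess k x s)
      ((blankMap δ)^[blockLen x j] e, blockStart x j + blockLen x j)) := by
  obtain ⟨hle, -, hiter⟩ := hxy
  have hy := (hr.walk_right (fun i hi => sparseGuess_blank y s (Or.inl hi))
    (hw.mono hle)).wstep
  rw [hiter, wstep_apply, sparseGuess_symbol y s hj] at hy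
  rw [wstep_apply, sparseGuess_symbol x s hj]
  cases hb : (δ ((blankMap δ)^[blockLen x j] e) (some (s ⟨j, hj⟩))).2 <;>
    simp only [hb, Bool.false_eq_true, reduceIte] at hy ⊢
  · simpa only [blockStart_zero] using synced_of_reaches_blockStart (Nat.zero_le k)
      (by simpa only [blockStart_zero] using hy)
  · simpa only [blockStart_succ] using synced_of_reaches_blockStart hj
      (by simpa only [blockStart_succ] using hy)

theorem Synced.wstep_of_blank (hxy : IsShortening δ (blockLen x j) (blockLen y j))
    (hj : j ≤ k) (ho : o < blockLen x j ∨ j = k) (hw : WalksRight δ e o)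
    (hr : Reaches δ (sparseGuess k y s) (q₀, 0) (e, blockStart y j)) :
    Synced δ q₀ s x y (wstep δ (sparseGuess k x s)
      ((blankMap δ)^[o] e, blockStart x j + o)) := by
  rw [wstep_apply, sparseGuess_blank x s ho]
  cases hb : (δ ((blankMap δ)^[o] e) none).2
  · have hoy : o < blockLen y j ∨ j = k := by
      have := hw.lt_card_of_return hb
      rcases hxy.2.1 with h | h <;> omega
    have hy := (hr.walk_right (fun i hi => sparseGuess_blank y s (by omega)) hw).wstep
    rw [wstep_apply, sparseGuess_blank y s hoy, hb, if_neg Bool.false_ne_true] at hy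
    rw [if_neg Bool.false_ne_true]
    simpa only [blockStart_zero] using synced_of_reaches_blockStart (Nat.zero_le k)
      (by simpa only [blockStart_zero] using hy)
  · refine ⟨j, o + 1, e, hj, by omega, hw.succ hb, ?_, hr⟩
    simp [iterate_succ_apply', blankMap, add_assoc]

theorem Synced.wstep (hxy : ∀ j ≤ k, IsShortening δ (blockLen x j) (blockLen y j))
    {c : Q × ℕ} (h : Synced δ q₀ s x y c) :
    Synced δ q₀ s x y (wstep δ (sparseGuess k x s) c) := by
  obtain ⟨j, o, e, hj, hox, hw, rfl, hr⟩ := h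
  by_cases hsym : j < k ∧ o = blockLen x j
  · obtain ⟨hjk, rfl⟩ := hsym
    exact wstep_of_symbol (hxy j hj) hjk hw hr
  · exact wstep_of_blank (hxy j hj) hj (by omega) hw hr

theorem Synced.reaches_state (hxy : ∀ j ≤ k, IsShortening δ (blockLen x j) (blockLen y j))
    {c : Q × ℕ} (h : Synced δ q₀ s x y c) :
    ∃ p, Reaches δ (sparseGuess k y s) (q₀, 0) (c.1, p) := by
  obtain ⟨j, o, e, hj, hox, hw, rfl, hr⟩ := h
  obtain ⟨o', ho', hblank, heq⟩ : ∃ o' ≤ o, (o' ≤ blockLen y j ∨ j = k) ∧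
      (blankMap δ)^[o'] e = (blankMap δ)^[o] e := by
    by_cases hfits : o ≤ blockLen y j ∨ j = k
    · exact ⟨o, le_rfl, hfits, rfl⟩
    have hcard : Fintype.card Q ≤ blockLen y j := by
      have := hox (by omega)
      rcases (hxy j hj).2.1 with h | h <;> omega
    obtain ⟨o', ho', heq⟩ := exists_lt_card_iterate_eq (blankMap δ) e o
    exact ⟨o', by omega, by omega, heq⟩
  exact ⟨_, heq ▸ hr.walk_right (fun i hi => sparseGuess_blank y s (by omega)) (hw.mono ho')⟩

theorem wAccepts_sparseGuess_of_isShortening {A : Set Q}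
    (hxy : ∀ j ≤ k, IsShortening δ (blockLen x j) (blockLen y j))
    (hx : wAccepts δ A q₀ (sparseGuess k x s)) : wAccepts δ A q₀ (sparseGuess k y s) := by
  have hsync : ∀ n, Synced δ q₀ s x y ((wstep δ (sparseGuess k x s))^[n] (q₀, 0)) := by
    intro n
    induction n with
    | zero =>
      rw [iterate_zero_apply]
      simpa only [blockStart_zero] using
        synced_of_reaches_blockStart (Nat.zero_le k) ⟨0, by rw [blockStart_zero]; rfl⟩
    | succ n ih => rw [iterate_succ_apply']; exact ih.wstep hxy
  obtain ⟨n, hn⟩ := hx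
  obtain ⟨p, m, hm⟩ := (hsync n).reaches_state hxy
  exact ⟨m, by rw [hm]; exact hn⟩

end Simulation

def shrinkLen (c N L : ℕ) : ℕ := if L ≤ c + N then L else c + (L - c) % N

theorem shrinkLen_le_add {c N : ℕ} (hN : 0 < N) (L : ℕ) : shrinkLen c N L ≤ c + N := by
  unfold shrinkLen
  split_ifs with h
  · exact h
  · have := Nat.mod_lt (L - c) hN
    omega

theorem isShortening_shrinkLen {Q S : Type*} [Fintype Q] (δ : Q → Option S → Q × Bool)
    (L : ℕ) : IsShortening δ L
      (shrinkLen (Fintype.card Q) ((Icc 1 (Fintype.card Q)).lcm id) L) := by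
  unfold shrinkLen
  split_ifs with h
  · exact ⟨le_rfl, Or.inl rfl, rfl⟩
  · have := Nat.mod_le (L - Fintype.card Q) ((Icc 1 (Fintype.card Q)).lcm id)
    refine ⟨by omega, Or.inr (Nat.le_add_right _ _), funext fun q => ?_⟩
    conv_rhs => rw [← Nat.add_sub_cancel' (show Fintype.card Q ≤ L by omega)]
    exact iterate_card_add_eq_of_modEq _ _ (Nat.mod_modEq _ _)

theorem stmt_11 {Q S : Type*} [Fintype Q] (δ : Q → Option S → Q × Bool)
    (A : Set Q) (q₀ : Q) (k : ℕ) (s : Fin k → S)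
    (N : ℕ) (hN : N = (Finset.Icc 1 (Fintype.card Q)).lcm id)
    (x : Fin (k + 1) → ℕ)
    (hx : wAccepts δ A q₀ (sparseGuess k x s)) :
    ∃ y : Fin (k + 1) → ℕ, (∀ i, y i ≤ Fintype.card Q + N) ∧
      wAccepts δ A q₀ (sparseGuess k y s) := by
  have hN0 : 0 < N := by
    rw [hN, Nat.pos_iff_ne_zero, Finset.lcm_ne_zero_iff]
    intro n hn
    exact Nat.one_le_iff_ne_zero.mp (mem_Icc.mp hn).1
  subst hN
  refine ⟨shrinkLen (Fintype.card Q) _ ∘ x, fun i => shrinkLen_le_add hN0 (x i),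
    wAccepts_sparseGuess_of_isShortening (fun j hj => ?_) hx⟩
  rw [blockLen_comp x _ hj]
  exact isShortening_shrinkLen δ _
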